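/- For the one-dimensional rate-independent system with R(v) = |v|, I(t,z) = (1/2)z² + F(z) − ℓ(t)z, F(z) = 2z³ − (5/2)z² + 1 for z ≥ 0 and F(z) = −2z³ − (5/2)z² + 1 for z < 0, ℓ(t) = −(1/2)(t − 3/2)² + 3/2, and initial value z₀ = −2/3, the function z defined by z(t) = −2/3 for t ∈ [0, 1/2), z(t) = −(1/3)(1 + (1/2)√(1 + 3(t − 3/2)²)) for t ∈ [1/2, 3/2), and z(t) = −1/2 for t ∈ [3/2, 3], is a Lipschitz continuous differential solution on [0, 3]: on [0, 1/2) one has z′ = 0 and |D_zI(t, −2/3)| = |ℓ(t)| ≤ 1; on (1/2, 3/2) one has z′(t) > 0 and D_zI(t, z(t)) = z(t) + F′(z(t)) − ℓ(t) = −1 with F′(z) = −6z² − 5z for z < 0; and on (3/2, 3] one has z′ = 0 and |D_zI(t, −1/2)| = |1/2 − ℓ(t)| ≤ 1. -/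

import Mathlib

open scoped NNReal

noncomputable section

namespace RIS1Dloc

/-- The non-quadratic part of the energy in the one-dimensional example with a
locally uniformly convex energy. -/
def F (z : ℝ) : ℝ :=
  if 0 ≤ z then 2 * z ^ 3 - 5 / 2 * z ^ 2 + 1 else -2 * z ^ 3 - 5 / 2 * z ^ 2 + 1

/-- The load `ℓ(t) = −(1/2)(t − 3/2)² + 3/2`. -/
def l (t : ℝ) : ℝ := -(1 / 2) * (t - 3 / 2) ^ 2 + 3 / 2

/-- The energy `I(t,z) = ½z² + F(z) − ℓ(t)z`. -/
def I (t z : ℝ) : ℝ := 1 / 2 * z ^ 2 + F z - l t * z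

/-- The candidate solution of the rate-independent system. -/
def zsol (t : ℝ) : ℝ :=
  if t < 1 / 2 then -2 / 3
  else if t < 3 / 2 then -(1 / 3) * (1 + 1 / 2 * Real.sqrt (1 + 3 * (t - 3 / 2) ^ 2))
  else -1 / 2

/-- Middle-piece formula. -/
def fmid (t : ℝ) : ℝ := -(1 / 3) * (1 + 1 / 2 * Real.sqrt (1 + 3 * (t - 3 / 2) ^ 2))

lemma arg_pos (t : ℝ) : (0:ℝ) < 1 + 3 * (t - 3 / 2) ^ 2 := by positivity

lemma sqrt_pos' (t : ℝ) : 0 < Real.sqrt (1 + 3 * (t - 3 / 2) ^ 2) :=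
  Real.sqrt_pos.mpr (arg_pos t)

lemma fmid_hasDerivAt (t : ℝ) :
    HasDerivAt fmid (-(t - 3 / 2) / (2 * Real.sqrt (1 + 3 * (t - 3 / 2) ^ 2))) t := by
  have hg : HasDerivAt (fun t : ℝ => 1 + 3 * (t - 3 / 2) ^ 2) (6 * (t - 3 / 2)) t := by
    have h := (((hasDerivAt_id t).sub_const (3/2 : ℝ)).pow 2).const_mul (3:ℝ)
    have h2 := h.const_add (1:ℝ)
    refine h2.congr_deriv ?_
    simp only [id_eq]
    ring
  have hsq := hg.sqrt (ne_of_gt (arg_pos t))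
  have h3 := ((hsq.const_mul (1/2 : ℝ)).const_add (1:ℝ)).const_mul (-(1/3) : ℝ)
  refine h3.congr_deriv ?_
  have hu := (sqrt_pos' t).ne'
  field_simp
  ring

lemma zsol_eq (t : ℝ) : zsol t = fmid (max (1/2) (min t (3/2))) := by
  unfold zsol fmid
  rcases lt_or_ge t (1/2) with h | h
  · rw [if_pos h]
    have hmin : min t (3/2 : ℝ) = t := min_eq_left (by linarith)
    have hmax : max (1/2 : ℝ) (min t (3/2)) = 1/2 := by rw [hmin]; exact max_eq_left h.le
    rw [hmax]
    have : (1 + 3 * ((1:ℝ)/2 - 3/2) ^ 2) = 2^2 := by norm_num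
    rw [this, Real.sqrt_sq (by norm_num)]
    norm_num
  · rw [if_neg (not_lt.mpr h)]
    rcases lt_or_ge t (3/2) with h2 | h2
    · rw [if_pos h2]
      have hmin : min t (3/2 : ℝ) = t := min_eq_left h2.le
      rw [hmin, max_eq_right h]
    · rw [if_neg (not_lt.mpr h2)]
      have hmin : min t (3/2 : ℝ) = 3/2 := min_eq_right h2
      have hmax : max (1/2 : ℝ) (min t (3/2)) = 3/2 := by rw [hmin]; norm_num
      rw [hmax]
      norm_num

lemma fmid_lip : LipschitzWith 1 fmid := by
  have hdiff : Differentiable ℝ fmid := fun t => (fmid_hasDerivAt t).differentiableAt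
  apply lipschitzWith_of_nnnorm_deriv_le hdiff
  intro t
  rw [(fmid_hasDerivAt t).deriv]
  rw [← NNReal.coe_le_coe, coe_nnnorm, Real.norm_eq_abs, NNReal.coe_one]
  have hu := sqrt_pos' t
  have habs : |t - 3/2| ≤ Real.sqrt (1 + 3 * (t - 3 / 2) ^ 2) := by
    rw [← Real.sqrt_sq_eq_abs]
    apply Real.sqrt_le_sqrt; nlinarith [sq_nonneg (t - 3/2)]
  rw [abs_div, abs_neg]
  rw [div_le_one (by rw [abs_of_pos (by linarith)]; linarith)]
  rw [abs_of_pos (by linarith : (0:ℝ) < 2 * Real.sqrt (1 + 3 * (t - 3 / 2) ^ 2))]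
  linarith

/-- derivative of the energy at a negative point -/
lemma derivI_neg (t z : ℝ) (hz : z < 0) :
    deriv (fun w : ℝ => I t w) z = -6 * z ^ 2 - 4 * z - l t := by
  have h1 : HasDerivAt (fun w : ℝ => 1/2 * w ^ 2 + (-2 * w ^ 3 - 5/2 * w ^ 2 + 1) - l t * w)
      (-6 * z ^ 2 - 4 * z - l t) z := by
    have h := (((hasDerivAt_pow 2 z).const_mul (1/2 : ℝ)).add
      ((((hasDerivAt_pow 3 z).const_mul (-2 : ℝ)).sub
        ((hasDerivAt_pow 2 z).const_mul (5/2 : ℝ))).add_const 1)).sub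
      ((hasDerivAt_id z).const_mul (l t))
    refine h.congr_deriv ?_
    push_cast
    ring
  have heq : (fun w : ℝ => I t w) =ᶠ[nhds z]
      (fun w : ℝ => 1/2 * w ^ 2 + (-2 * w ^ 3 - 5/2 * w ^ 2 + 1) - l t * w) := by
    filter_upwards [Iio_mem_nhds hz] with w hw
    simp only [I, F, if_neg (not_le.mpr (Set.mem_Iio.mp hw))]
  exact (h1.congr_of_eventuallyEq heq).deriv

/-- for the one-dimensional rate-independent system with
`R(v) = |v|`, the above energy and the initial value `z₀ = −2/3`, the function
`zsol` is a Lipschitz continuous differential solution on `[0,3]`: on `[0,1/2)`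
it is constant with `D_zI(t,−2/3) = −ℓ(t)` and `|ℓ(t)| ≤ 1`; on `(1/2,3/2)` it
has a positive derivative and `D_zI(t,zsol(t)) = −1`; on `(3/2,3]` it is constant
with `D_zI(t,−1/2) = 1/2 − ℓ(t)` and `|1/2 − ℓ(t)| ≤ 1`. In particular the
inclusion `0 ∈ ∂|·|(zsol′(t)) + D_zI(t,zsol(t))` holds for all `t ∈ [0,3]` except
the two kinks `t = 1/2`, `t = 3/2`. -/
theorem statement19 :
    (∃ L : ℝ≥0, LipschitzOnWith L zsol (Set.Icc (0 : ℝ) 3)) ∧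
    zsol 0 = -2 / 3 ∧
    (∀ t ∈ Set.Ico (0 : ℝ) (1 / 2),
      HasDerivAt zsol 0 t ∧
      deriv (fun w : ℝ => I t w) (-2 / 3) = -(l t) ∧ |l t| ≤ 1) ∧
    (∀ t ∈ Set.Ioo (1 / 2 : ℝ) (3 / 2),
      ∃ d : ℝ, 0 < d ∧ HasDerivAt zsol d t ∧
        deriv (fun w : ℝ => I t w) (zsol t) = -1) ∧
    (∀ t ∈ Set.Ioc (3 / 2 : ℝ) 3,
      HasDerivAt zsol 0 t ∧
      deriv (fun w : ℝ => I t w) (-1 / 2) = 1 / 2 - l t ∧ |1 / 2 - l t| ≤ 1) ∧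
    (∀ t ∈ Set.Icc (0 : ℝ) 3, t ≠ 1 / 2 → t ≠ 3 / 2 →
      ∃ d ξ : ℝ, HasDerivAt zsol d t ∧ (∀ v : ℝ, |d| + ξ * (v - d) ≤ |v|) ∧
        ξ + deriv (fun w : ℝ => I t w) (zsol t) = 0) := by
  -- part 1
  have hlip : ∃ L : ℝ≥0, LipschitzOnWith L zsol (Set.Icc (0 : ℝ) 3) := by
    refine ⟨1, ?_⟩
    have hz : zsol = fun t => fmid (max (1/2) (min t (3/2))) := funext zsol_eq
    rw [hz]
    have hclamp : LipschitzWith 1 (fun t : ℝ => max (1/2 : ℝ) (min t (3/2))) :=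
      (LipschitzWith.id.min_const (3/2 : ℝ)).const_max (1/2 : ℝ)
    simpa [Function.comp_def] using (fmid_lip.comp hclamp).lipschitzOnWith
  -- part 2
  have hz0 : zsol 0 = -2 / 3 := by unfold zsol; norm_num
  -- part 3
  have h3 : ∀ t ∈ Set.Ico (0 : ℝ) (1 / 2),
      HasDerivAt zsol 0 t ∧
      deriv (fun w : ℝ => I t w) (-2 / 3) = -(l t) ∧ |l t| ≤ 1 := by
    intro t ht
    obtain ⟨ht0, ht1⟩ := ht
    refine ⟨?_, ?_, ?_⟩
    · have heq : zsol =ᶠ[nhds t] (fun _ => -2/3 : ℝ → ℝ) := by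
        filter_upwards [Iio_mem_nhds ht1] with s hs
        simp only [zsol, if_pos (Set.mem_Iio.mp hs)]
      exact (hasDerivAt_const t (-2/3 : ℝ)).congr_of_eventuallyEq heq
    · rw [derivI_neg t (-2/3) (by norm_num)]; ring
    · rw [abs_le]; unfold l; constructor <;> nlinarith
  -- part 4
  have h4 : ∀ t ∈ Set.Ioo (1 / 2 : ℝ) (3 / 2),
      ∃ d : ℝ, 0 < d ∧ HasDerivAt zsol d t ∧
        deriv (fun w : ℝ => I t w) (zsol t) = -1 := by
    intro t ht
    obtain ⟨ht0, ht1⟩ := ht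
    refine ⟨-(t - 3/2) / (2 * Real.sqrt (1 + 3 * (t - 3 / 2) ^ 2)), ?_, ?_, ?_⟩
    · apply div_pos (by linarith) (by linarith [sqrt_pos' t])
    · have heq : zsol =ᶠ[nhds t] fmid := by
        filter_upwards [Ioo_mem_nhds ht0 ht1] with s hs
        simp only [zsol, fmid, if_neg (not_lt.mpr hs.1.le), if_pos hs.2]
      exact (fmid_hasDerivAt t).congr_of_eventuallyEq heq
    · have hzt : zsol t = -(1 / 3) * (1 + 1 / 2 * Real.sqrt (1 + 3 * (t - 3 / 2) ^ 2)) := by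
        simp only [zsol, if_neg (not_lt.mpr ht0.le), if_pos ht1]
      have hu := sqrt_pos' t
      have hneg : zsol t < 0 := by rw [hzt]; nlinarith
      rw [derivI_neg t _ hneg, hzt]
      have hsq : Real.sqrt (1 + 3 * (t - 3 / 2) ^ 2) ^ 2 = 1 + 3 * (t - 3 / 2) ^ 2 :=
        Real.sq_sqrt (arg_pos t).le
      unfold l
      nlinarith [hsq]
  -- part 5
  have h5 : ∀ t ∈ Set.Ioc (3 / 2 : ℝ) 3,
      HasDerivAt zsol 0 t ∧
      deriv (fun w : ℝ => I t w) (-1 / 2) = 1 / 2 - l t ∧ |1 / 2 - l t| ≤ 1 := by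
    intro t ht
    obtain ⟨ht0, ht1⟩ := ht
    refine ⟨?_, ?_, ?_⟩
    · have heq : zsol =ᶠ[nhds t] (fun _ => -1/2 : ℝ → ℝ) := by
        filter_upwards [Ioi_mem_nhds ht0] with s hs
        simp only [zsol, if_neg (not_lt.mpr (by linarith [Set.mem_Ioi.mp hs] : (1:ℝ)/2 ≤ s)),
          if_neg (not_lt.mpr (le_of_lt (Set.mem_Ioi.mp hs)))]
      exact (hasDerivAt_const t (-1/2 : ℝ)).congr_of_eventuallyEq heq
    · rw [derivI_neg t (-1/2) (by norm_num)]; ring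
    · rw [abs_le]; unfold l; constructor <;> nlinarith
  refine ⟨hlip, hz0, h3, h4, h5, ?_⟩
  -- part 6
  intro t ht hne1 hne2
  obtain ⟨ht0, ht3⟩ := ht
  rcases lt_trichotomy t (1/2) with h | h | h
  · obtain ⟨hd, hder, habs⟩ := h3 t ⟨ht0, h⟩
    have hzt : zsol t = -2/3 := by simp only [zsol, if_pos h]
    refine ⟨0, l t, hd, ?_, by rw [hzt, hder]; ring⟩
    intro v
    simp only [abs_zero, sub_zero, zero_add]
    calc l t * v ≤ |l t * v| := le_abs_self _
      _ = |l t| * |v| := abs_mul _ _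
      _ ≤ 1 * |v| := mul_le_mul_of_nonneg_right habs (abs_nonneg v)
      _ = |v| := one_mul _
  · exact absurd h hne1
  · rcases lt_trichotomy t (3/2) with h2 | h2 | h2
    · obtain ⟨d, hdpos, hder, hderiv⟩ := h4 t ⟨h, h2⟩
      refine ⟨d, 1, hder, ?_, by rw [hderiv]; ring⟩
      intro v
      rw [abs_of_pos hdpos, one_mul]
      have := le_abs_self v
      linarith
    · exact absurd h2 hne2
    · obtain ⟨hd, hder, habs⟩ := h5 t ⟨h2, ht3⟩
      have hzt : zsol t = -1/2 := by
        simp only [zsol, if_neg (not_lt.mpr (by linarith : (1:ℝ)/2 ≤ t)),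
          if_neg (not_lt.mpr h2.le)]
      refine ⟨0, l t - 1/2, hd, ?_, by rw [hzt, hder]; ring⟩
      intro v
      simp only [abs_zero, sub_zero, zero_add]
      have habs' : |l t - 1/2| ≤ 1 := by rw [abs_sub_comm]; exact habs
      calc (l t - 1/2) * v ≤ |(l t - 1/2) * v| := le_abs_self _
        _ = |l t - 1/2| * |v| := abs_mul _ _
        _ ≤ 1 * |v| := mul_le_mul_of_nonneg_right habs' (abs_nonneg v)
        _ = |v| := one_mul _


end RIS1Dloc
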